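/- arXiv:1902.09234 — 7 statements merged into one kernel-verified Lean document; each statement's English description precedes it below -/
import Mathlib

section
/- Let V be a finite multiset of points in ℝ and let P ⊆ ℝ be a finite set with |P| = k. Then there exists a finite set Q ⊆ ℝ with |Q| ≤ 2k and Q ∩ P = ∅ such that every voter v ∈ V with v ∉ P satisfies dist(v,Q) < dist(v,P). (That is, by surrounding each point of P with two sufficiently close points, player Q wins every voter that does not coincide with a point of P.) -/
open scoped Classical

/-- By surrounding each point of `P` with two sufficiently close points, player Q
can win every voter that does not coincide with a point of `P`. -/
theorem stmt1 (V : Multiset ℝ) (P : Finset ℝ) (hP : P.Nonempty) :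
    ∃ Q : Finset ℝ, Q.card ≤ 2 * P.card ∧ Disjoint Q P ∧
      ∀ v ∈ V, v ∉ P →
        Metric.infDist v (Q : Set ℝ) < Metric.infDist v (P : Set ℝ) := by
  -- collect all relevant positive quantities
  set T : Finset ℝ :=
    insert 1 ((((P ×ˢ P).filter (fun pq => pq.1 ≠ pq.2)).image
        (fun pq => |pq.1 - pq.2|)) ∪
      ((V.toFinset.filter (fun v => v ∉ P)).image
        (fun v => Metric.infDist v (P : Set ℝ)))) with hTdef
  have hT : T.Nonempty := ⟨1, Finset.mem_insert_self _ _⟩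
  have hPclosed : IsClosed (P : Set ℝ) := (P.finite_toSet).isClosed
  have hTpos : ∀ t ∈ T, 0 < t := by
    intro t ht
    rw [hTdef] at ht
    rcases Finset.mem_insert.mp ht with h1 | h2
    · simp [h1]
    rcases Finset.mem_union.mp h2 with h3 | h4
    · obtain ⟨pq, hpq, rfl⟩ := Finset.mem_image.mp h3
      have := (Finset.mem_filter.mp hpq).2
      have : pq.1 - pq.2 ≠ 0 := sub_ne_zero.mpr this
      exact abs_pos.mpr this
    · obtain ⟨v, hv, rfl⟩ := Finset.mem_image.mp h4
      have hvP : v ∉ P := (Finset.mem_filter.mp hv).2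
      exact (hPclosed.notMem_iff_infDist_pos ⟨hP.choose, hP.choose_spec⟩).mp
        (by simpa using hvP)
  set ε : ℝ := T.min' hT / 2 with hεdef
  have hεpos : 0 < ε := by
    have := hTpos _ (T.min'_mem hT)
    positivity
  have hεlt : ∀ t ∈ T, ε < t := by
    intro t ht
    have h1 : T.min' hT ≤ t := Finset.min'_le _ _ ht
    have h2 : 0 < T.min' hT := hTpos _ (T.min'_mem hT)
    nlinarith
  refine ⟨P.image (· + ε) ∪ P.image (· - ε), ?_, ?_, ?_⟩
  · calc (P.image (· + ε) ∪ P.image (· - ε)).card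
        ≤ (P.image (· + ε)).card + (P.image (· - ε)).card := Finset.card_union_le _ _
      _ ≤ P.card + P.card := add_le_add (Finset.card_image_le) (Finset.card_image_le)
      _ = 2 * P.card := by ring
  · rw [Finset.disjoint_left]
    intro x hx hxP
    rcases Finset.mem_union.mp hx with h | h
    · obtain ⟨p, hp, rfl⟩ := Finset.mem_image.mp h
      have hne : p + ε ≠ p := by intro h; nlinarith [congrArg (· - p) h]
      have hmem : |(p + ε) - p| ∈ T := by
        rw [hTdef]
        refine Finset.mem_insert_of_mem (Finset.mem_union_left _ ?_)
        exact Finset.mem_image.mpr ⟨(p + ε, p),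
          Finset.mem_filter.mpr ⟨Finset.mem_product.mpr ⟨hxP, hp⟩, hne⟩, rfl⟩
      have := hεlt _ hmem
      have : |(p + ε) - p| = ε := by
        rw [add_sub_cancel_left, abs_of_pos hεpos]
      linarith [hεlt _ hmem, this.symm.le]
    · obtain ⟨p, hp, rfl⟩ := Finset.mem_image.mp h
      have hne : p - ε ≠ p := by intro h; nlinarith [congrArg (· - p) h]
      have hmem : |(p - ε) - p| ∈ T := by
        rw [hTdef]
        refine Finset.mem_insert_of_mem (Finset.mem_union_left _ ?_)
        exact Finset.mem_image.mpr ⟨(p - ε, p),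
          Finset.mem_filter.mpr ⟨Finset.mem_product.mpr ⟨hxP, hp⟩, hne⟩, rfl⟩
      have habs : |(p - ε) - p| = ε := by
        rw [sub_sub_cancel_left, abs_neg, abs_of_pos hεpos]
      linarith [hεlt _ hmem, habs.le]
  · intro v hvV hvP
    have hd : Metric.infDist v (P : Set ℝ) ∈ T := by
      rw [hTdef]
      refine Finset.mem_insert_of_mem (Finset.mem_union_right _ ?_)
      exact Finset.mem_image.mpr ⟨v, Finset.mem_filter.mpr
        ⟨Multiset.mem_toFinset.mpr hvV, hvP⟩, rfl⟩
    have hεd : ε < Metric.infDist v (P : Set ℝ) := hεlt _ hd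
    obtain ⟨p, hpP, hpd⟩ := (P.finite_toSet.isCompact).exists_infDist_eq_dist
      (by exact_mod_cast hP.to_set) v
    have hdist : Metric.infDist v (P : Set ℝ) = |v - p| := by
      rw [hpd, Real.dist_eq]
    have hpP' : p ∈ P := hpP
    rcases le_or_gt p v with hle | hlt
    · -- use q = p + ε
      have hq : p + ε ∈ P.image (· + ε) ∪ P.image (· - ε) :=
        Finset.mem_union_left _ (Finset.mem_image.mpr ⟨p, hpP', rfl⟩)
      have hle' : ε < v - p := by
        rw [hdist, abs_of_nonneg (by linarith)] at hεd; linarith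
      have h1 : Metric.infDist v ((P.image (· + ε) ∪ P.image (· - ε) : Finset ℝ) : Set ℝ)
          ≤ dist v (p + ε) := Metric.infDist_le_dist_of_mem (by exact_mod_cast hq)
      have h2 : dist v (p + ε) = v - p - ε := by
        rw [Real.dist_eq, abs_of_nonneg (by linarith)]; ring
      rw [hdist, abs_of_nonneg (by linarith)]
      linarith
    · -- use q = p - ε
      have hq : p - ε ∈ P.image (· + ε) ∪ P.image (· - ε) :=
        Finset.mem_union_right _ (Finset.mem_image.mpr ⟨p, hpP', rfl⟩)
      have hle' : ε < p - v := by
        rw [hdist, abs_of_nonpos (by linarith)] at hεd; linarith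
      have h1 : Metric.infDist v ((P.image (· + ε) ∪ P.image (· - ε) : Finset ℝ) : Set ℝ)
          ≤ dist v (p - ε) := Metric.infDist_le_dist_of_mem (by exact_mod_cast hq)
      have h2 : dist v (p - ε) = p - ε - v := by
        rw [Real.dist_eq, abs_of_nonpos (by linarith)]; ring
      rw [hdist, abs_of_nonpos (by linarith)]
      linarith
end

section
/- Let V be a finite multiset of points in ℝ with n elements, and let k,ℓ ≥ 1 be integers with ℓ ≥ 2k and k at most the number of distinct points occurring in V. Then Γ_{k,ℓ}(V) equals the maximum, over all sets S of k distinct voter positions, of the total multiplicity in V of the points of S; that is, the trivial strategy placing P on the k voter positions of highest multiplicity is optimal for player P when ℓ ≥ 2k. -/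
open scoped Classical

/-- Number of voters (counted with multiplicity) won by player P using strategy `P`
against strategy `Q`: voter `v` is won iff `dist(v,P) ≤ dist(v,Q)` (ties favor P). -/
noncomputable def vwins (V : Multiset ℝ) (P Q : Finset ℝ) : ℕ :=
  Multiset.card (V.filter (fun v =>
    Metric.infDist v (P : Set ℝ) ≤ Metric.infDist v (Q : Set ℝ)))

/-- `Γ_{k,ℓ}(V)`: the max over strategies `P` with `|P| = k` of the min over
strategies `Q` with `|Q| = ℓ` of the number of voters won by `P`. -/
noncomputable def Gamma (V : Multiset ℝ) (k l : ℕ) : ℕ :=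
  sSup { g : ℕ | ∃ P : Finset ℝ, P.card = k ∧
    g = sInf { w : ℕ | ∃ Q : Finset ℝ, Q.card = l ∧ w = vwins V P Q } }

/-- Cardinality of a filter is monotone in the (pointwise on `V`) predicate. -/
lemma card_filter_le_of_imp (V : Multiset ℝ) (p q : ℝ → Prop)
    [DecidablePred p] [DecidablePred q]
    (h : ∀ v ∈ V, p v → q v) :
    Multiset.card (V.filter p) ≤ Multiset.card (V.filter q) := by
  apply Multiset.card_le_card
  rw [Multiset.le_iff_count]
  intro a
  rw [Multiset.count_filter, Multiset.count_filter]
  by_cases ha : a ∈ V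
  · by_cases hpa : p a
    · simp [hpa, h a ha hpa]
    · simp [hpa]
  · have : V.count a = 0 := Multiset.count_eq_zero_of_notMem ha
    simp [this]

lemma card_filter_mem (V : Multiset ℝ) (S : Finset ℝ) :
    Multiset.card (V.filter (· ∈ S)) = ∑ s ∈ S, V.count s := by
  rw [← Multiset.toFinset_sum_count_eq]
  rw [Finset.sum_subset (show (V.filter (· ∈ S)).toFinset ⊆ S by
      intro a ha
      rw [Multiset.mem_toFinset, Multiset.mem_filter] at ha
      exact ha.2)]
  · apply Finset.sum_congr rfl
    intro a haS
    rw [Multiset.count_filter, if_pos haS]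
  · intro a _ ha
    exact Multiset.count_eq_zero.mpr (fun h => ha (Multiset.mem_toFinset.mpr h))

/-- Against `P`, there is a reply `Q` of size `l ≥ 2|P|` that limits `P` to the
voters located exactly at points of `P`. -/
lemma exists_good_Q (V : Multiset ℝ) (P : Finset ℝ) (hP : P.Nonempty) (l : ℕ)
    (hl : 2 * P.card ≤ l) :
    ∃ Q : Finset ℝ, Q.card = l ∧ vwins V P Q ≤ Multiset.card (V.filter (· ∈ P)) := by
  classical
  have hPset : (P : Set ℝ).Nonempty := ⟨hP.choose, hP.choose_spec⟩
  have hPcpt : IsCompact (P : Set ℝ) := P.finite_toSet.isCompact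
  by_cases hTne : (V.toFinset \ P).Nonempty
  · set T := V.toFinset \ P with hT
    set δ := T.inf' hTne (fun v => Metric.infDist v (P : Set ℝ)) with hδ
    have hδpos : 0 < δ := by
      rw [hδ, Finset.lt_inf'_iff]
      intro v hv
      have hvP : v ∉ P := (Finset.mem_sdiff.mp hv).2
      obtain ⟨p, hp, hpd⟩ := hPcpt.exists_infDist_eq_dist hPset v
      rw [hpd]
      exact dist_pos.mpr (fun hvp => hvP (by rw [hvp]; exact hp))
    set Q0 := P.image (· + δ) ∪ P.image (· - δ) with hQ0
    have hQ0card : Q0.card ≤ l := by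
      refine le_trans (Finset.card_union_le _ _) (le_trans ?_ hl)
      have h1 := Finset.card_image_le (s := P) (f := (· + δ))
      have h2 := Finset.card_image_le (s := P) (f := (· - δ))
      omega
    obtain ⟨Q, hQ0Q, hQcard⟩ := Infinite.exists_superset_card_eq Q0 l hQ0card
    refine ⟨Q, hQcard, ?_⟩
    unfold vwins
    apply card_filter_le_of_imp
    intro v hv hpred
    by_contra hvP
    have hvT : v ∈ T := Finset.mem_sdiff.mpr ⟨Multiset.mem_toFinset.mpr hv, hvP⟩
    have hδle : δ ≤ Metric.infDist v (P : Set ℝ) := Finset.inf'_le _ hvT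
    obtain ⟨p, hp, hpd⟩ := hPcpt.exists_infDist_eq_dist hPset v
    have hdq : Metric.infDist v (Q : Set ℝ) ≤ dist v p - δ := by
      rcases le_total p v with hle | hle
      · have hq : p + δ ∈ Q := hQ0Q (Finset.mem_union_left _
          (Finset.mem_image.mpr ⟨p, hp, rfl⟩))
        refine le_trans (Metric.infDist_le_dist_of_mem (Finset.mem_coe.mpr hq)) ?_
        have hd : dist v p = v - p := by
          rw [Real.dist_eq, abs_of_nonneg (by linarith)]
        have : δ ≤ v - p := by rw [← hd, ← hpd]; exact hδle
        rw [Real.dist_eq, abs_of_nonneg (by linarith), hd]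
        ring_nf
        linarith
      · have hq : p - δ ∈ Q := hQ0Q (Finset.mem_union_right _
          (Finset.mem_image.mpr ⟨p, hp, rfl⟩))
        refine le_trans (Metric.infDist_le_dist_of_mem (Finset.mem_coe.mpr hq)) ?_
        have hd : dist v p = p - v := by
          rw [Real.dist_eq, abs_of_nonpos (by linarith)]; ring
        have : δ ≤ p - v := by rw [← hd, ← hpd]; exact hδle
        rw [Real.dist_eq, abs_of_nonpos (by linarith), hd]
        ring_nf
        linarith
    have : Metric.infDist v (Q : Set ℝ) < Metric.infDist v (P : Set ℝ) := by
      rw [hpd]; linarith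
    exact absurd hpred (not_le.mpr this)
  · obtain ⟨Q, _, hQcard⟩ := Infinite.exists_superset_card_eq (∅ : Finset ℝ) l (by simp)
    refine ⟨Q, hQcard, ?_⟩
    unfold vwins
    apply card_filter_le_of_imp
    intro v hv _
    by_contra hvP
    exact hTne ⟨v, Finset.mem_sdiff.mpr ⟨Multiset.mem_toFinset.mpr hv, hvP⟩⟩

/-- When `ℓ ≥ 2k` and `k` is at most the number of distinct voter positions,
`Γ_{k,ℓ}(V)` equals the maximum, over sets `S` of `k` distinct voter positions,
of the total multiplicity of the points of `S`: the trivial strategy is optimal. -/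
theorem stmt2 (V : Multiset ℝ) (k l : ℕ) (hk : 1 ≤ k) (hl2 : 2 * k ≤ l)
    (hkV : k ≤ V.toFinset.card) :
    (∀ S : Finset ℝ, S ⊆ V.toFinset → S.card = k →
      (∑ s ∈ S, V.count s) ≤ Gamma V k l) ∧
    (∃ S : Finset ℝ, S ⊆ V.toFinset ∧ S.card = k ∧
      Gamma V k l = ∑ s ∈ S, V.count s) := by
  classical
  have hQex : ∀ P : Finset ℝ,
      {w : ℕ | ∃ Q : Finset ℝ, Q.card = l ∧ w = vwins V P Q}.Nonempty := by
    intro P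
    obtain ⟨Q, _, hQcard⟩ := Infinite.exists_superset_card_eq (∅ : Finset ℝ) l (by simp)
    exact ⟨vwins V P Q, Q, hQcard, rfl⟩
  have hbdd : BddAbove { g : ℕ | ∃ P : Finset ℝ, P.card = k ∧
      g = sInf { w : ℕ | ∃ Q : Finset ℝ, Q.card = l ∧ w = vwins V P Q } } := by
    refine ⟨Multiset.card V, ?_⟩
    rintro g ⟨P, hPcard, rfl⟩
    obtain ⟨w, hw⟩ := hQex P
    refine le_trans (Nat.sInf_le hw) ?_
    obtain ⟨Q, hQ, rfl⟩ := hw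
    exact Multiset.card_le_card (Multiset.filter_le _ _)
  have part1 : ∀ S : Finset ℝ, S ⊆ V.toFinset → S.card = k →
      (∑ s ∈ S, V.count s) ≤ Gamma V k l := by
    intro S hS hScard
    have hle : (∑ s ∈ S, V.count s) ≤
        sInf {w : ℕ | ∃ Q : Finset ℝ, Q.card = l ∧ w = vwins V S Q} := by
      refine le_csInf (hQex S) ?_
      rintro w ⟨Q, hQcard, rfl⟩
      rw [← card_filter_mem V S]
      unfold vwins
      apply card_filter_le_of_imp
      intro v _ hvS
      rw [Metric.infDist_zero_of_mem (Finset.mem_coe.mpr hvS)]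
      exact Metric.infDist_nonneg
    exact le_trans hle (le_csSup hbdd ⟨S, hScard, rfl⟩)
  have hpow : (V.toFinset.powersetCard k).Nonempty := Finset.powersetCard_nonempty.mpr hkV
  obtain ⟨S, hSmem, hSmax⟩ := Finset.exists_max_image (V.toFinset.powersetCard k)
    (fun S => ∑ s ∈ S, V.count s) hpow
  obtain ⟨hSsub, hScard⟩ := Finset.mem_powersetCard.mp hSmem
  refine ⟨part1, S, hSsub, hScard, le_antisymm ?_ (part1 S hSsub hScard)⟩
  refine csSup_le' ?_
  rintro g ⟨P, hPcard, rfl⟩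
  have hPne : P.Nonempty := Finset.card_pos.mp (by rw [hPcard]; exact hk)
  obtain ⟨Q, hQcard, hQle⟩ := exists_good_Q V P hPne l (by rw [hPcard]; exact hl2)
  refine le_trans (Nat.sInf_le ⟨Q, hQcard, rfl⟩) (le_trans hQle ?_)
  have h1 : Multiset.card (V.filter (· ∈ P)) ≤
      Multiset.card (V.filter (· ∈ V.toFinset ∩ P)) := by
    apply card_filter_le_of_imp
    intro v hv hvP
    exact Finset.mem_inter.mpr ⟨Multiset.mem_toFinset.mpr hv, hvP⟩
  obtain ⟨u, hAu, huV, hucard⟩ := Finset.exists_subsuperset_card_eq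
    (Finset.inter_subset_left (s₁ := V.toFinset) (s₂ := P))
    (le_trans (Finset.card_le_card Finset.inter_subset_right) (le_of_eq hPcard)) hkV
  calc Multiset.card (V.filter (· ∈ P))
      ≤ Multiset.card (V.filter (· ∈ V.toFinset ∩ P)) := h1
    _ = ∑ s ∈ V.toFinset ∩ P, V.count s := card_filter_mem V _
    _ ≤ ∑ s ∈ u, V.count s := Finset.sum_le_sum_of_subset hAu
    _ ≤ ∑ s ∈ S, V.count s :=
        hSmax u (Finset.mem_powersetCard.mpr ⟨huV, hucard⟩)
end

section
/- Let V be a finite multiset of points in ℝ, let P ⊆ ℝ be a finite set, let p, p' ∈ P with p < p', and let a ∈ ℝ with a < p be such that every voter v ∈ V satisfies v ≤ a or v ≥ p'. Set P' := (P \ {p}) ∪ {a}. Then for every finite nonempty set Q ⊆ ℝ, every voter that P wins against Q is also won by P' against Q; in particular |V[P'⪰Q]| ≥ |V[P⪰Q]| for every Q. (Thus moving the left one of two points of P lying in a voter-free half-open interval (v_i, v_{i+1}] onto the voter v_i never hurts player P.) -/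
open scoped Classical

lemma aux_infDist_le (P : Finset ℝ) (p p' : ℝ)
    (hp : p ∈ P) (hp' : p' ∈ P) (hpp' : p < p')
    (a : ℝ) (hap : a < p) (v : ℝ) (hv : v ≤ a ∨ p' ≤ v) :
    Metric.infDist v ((insert a (P.erase p) : Finset ℝ) : Set ℝ) ≤
      Metric.infDist v (P : Set ℝ) := by
  obtain ⟨q, hq, hqd⟩ := (P.finite_toSet.isCompact).exists_infDist_eq_dist
    ⟨p, by exact_mod_cast hp⟩ v
  rw [hqd]
  by_cases hqp : q = p
  · rw [hqp]
    rcases hv with h | h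
    · calc Metric.infDist v ((insert a (P.erase p) : Finset ℝ) : Set ℝ)
          ≤ dist v a := Metric.infDist_le_dist_of_mem (by simp)
        _ ≤ dist v p := by
            rw [Real.dist_eq, Real.dist_eq]
            rw [abs_of_nonpos (by linarith), abs_of_nonpos (by linarith)]
            linarith
    · calc Metric.infDist v ((insert a (P.erase p) : Finset ℝ) : Set ℝ)
          ≤ dist v p' := Metric.infDist_le_dist_of_mem
            (by simp [Finset.mem_erase, ne_of_gt hpp', hp'])
        _ ≤ dist v p := by
            rw [Real.dist_eq, Real.dist_eq]
            rw [abs_of_nonneg (by linarith), abs_of_nonneg (by linarith)]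
            linarith
  · refine Metric.infDist_le_dist_of_mem ?_
    have : q ∈ P := by exact_mod_cast hq
    simp [Finset.mem_erase, hqp, this]

/-- Moving the left one of two points of `P` lying in a voter-free region onto a
point `a` to its left (with no voter strictly between `a` and `p'`) never hurts
player P: every voter won by `P` against any `Q` is also won by
`P' = (P \ {p}) ∪ {a}`, hence `|V[P'⪰Q]| ≥ |V[P⪰Q]|`. -/
theorem stmt3 (V : Multiset ℝ) (P : Finset ℝ) (p p' : ℝ)
    (hp : p ∈ P) (hp' : p' ∈ P) (hpp' : p < p')
    (a : ℝ) (hap : a < p) (hV : ∀ v ∈ V, v ≤ a ∨ p' ≤ v) :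
    ∀ Q : Finset ℝ, Q.Nonempty →
      (∀ v ∈ V, Metric.infDist v (P : Set ℝ) ≤ Metric.infDist v (Q : Set ℝ) →
        Metric.infDist v ((insert a (P.erase p) : Finset ℝ) : Set ℝ) ≤
          Metric.infDist v (Q : Set ℝ)) ∧
      vwins V P Q ≤ vwins V (insert a (P.erase p)) Q := by
  intro Q _
  have key : ∀ v ∈ V, Metric.infDist v (P : Set ℝ) ≤ Metric.infDist v (Q : Set ℝ) →
      Metric.infDist v ((insert a (P.erase p) : Finset ℝ) : Set ℝ) ≤
        Metric.infDist v (Q : Set ℝ) := fun v hvV h =>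
    le_trans (aux_infDist_le P p p' hp hp' hpp' a hap v (hV v hvV)) h
  refine ⟨key, ?_⟩
  unfold vwins
  apply Multiset.card_le_card
  have heq : V.filter (fun v =>
      Metric.infDist v (P : Set ℝ) ≤ Metric.infDist v (Q : Set ℝ)) =
    V.filter (fun v =>
      (Metric.infDist v (P : Set ℝ) ≤ Metric.infDist v (Q : Set ℝ)) ∧
      Metric.infDist v ((insert a (P.erase p) : Finset ℝ) : Set ℝ) ≤
        Metric.infDist v (Q : Set ℝ)) := by
    apply Multiset.filter_congr
    intro v hv
    exact ⟨fun h => ⟨h, key v hv h⟩, fun h => h.1⟩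
  rw [heq]
  exact Multiset.monotone_filter_right V (fun v h => h.2)
end

section
/- Let V be a nonempty finite multiset of points in ℝ, and let k,ℓ ≥ 1 be integers with k strictly smaller than the number of distinct points occurring in V. Then there exists a set P ⊆ ℝ with |P| = k whose leftmost point min P coincides with a voter of V, and such that |V[P⪰Q]| ≥ Γ_{k,ℓ}(V) for every set Q ⊆ ℝ with |Q| = ℓ. That is, some optimal strategy for player P has its leftmost point at a voter. -/
open scoped Classical

/- ## Auxiliary lemmas -/

lemma finset_exists_min (v : ℝ) {S : Finset ℝ} (hS : S.Nonempty) :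
    ∃ p ∈ S, Metric.infDist v (S : Set ℝ) = dist v p :=
  S.finite_toSet.isCompact.exists_infDist_eq_dist (by exact_mod_cast hS) v

lemma vwins_mono {V : Multiset ℝ} {P Q P' Q' : Finset ℝ}
    (h : ∀ v ∈ V, Metric.infDist v (P : Set ℝ) ≤ Metric.infDist v (Q' : Set ℝ) →
      Metric.infDist v (P' : Set ℝ) ≤ Metric.infDist v (Q : Set ℝ)) :
    vwins V P Q' ≤ vwins V P' Q := by
  unfold vwins
  apply Multiset.card_le_card
  rw [Multiset.le_iff_count]
  intro a
  rw [Multiset.count_filter, Multiset.count_filter]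
  split_ifs with h1 h2
  · exact le_rfl
  · rcases Nat.eq_zero_or_pos (Multiset.count a V) with h0 | h0
    · simp [h0]
    · exact absurd (h a (Multiset.count_pos.mp h0) h1) h2
  · exact Nat.zero_le _
  · exact Nat.zero_le _

lemma dlb (x y : ℝ) : y - x ≤ dist x y := by
  rw [Real.dist_eq, abs_sub_comm]; exact le_abs_self _

lemma dlb' (x y : ℝ) : x - y ≤ dist x y := by
  rw [Real.dist_eq]; exact le_abs_self _

lemma dub {x y : ℝ} (h : y ≤ x) : dist x y = x - y := by
  rw [Real.dist_eq]; exact abs_of_nonneg (by linarith)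

lemma dub' {x y : ℝ} (h : x ≤ y) : dist x y = y - x := by
  rw [dist_comm]; exact dub h

lemma lb_insert {v m : ℝ} {R : Finset ℝ} (hvm : v < m) (hR : ∀ p ∈ R, m < p) :
    m - v ≤ Metric.infDist v ((insert m R : Finset ℝ) : Set ℝ) := by
  obtain ⟨p, hp, hpe⟩ := finset_exists_min v (Finset.insert_nonempty m R)
  rw [hpe]
  have hmp : m ≤ p := by
    rcases Finset.mem_insert.mp hp with rfl | hpR
    · exact le_rfl
    · exact (hR p hpR).le
  calc m - v ≤ p - v := by linarith
    _ ≤ dist v p := dlb v p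

lemma dom_transfer {V : Multiset ℝ} {γ l : ℕ} {P P' : Finset ℝ}
    (hdom : ∀ v ∈ V, Metric.infDist v (P' : Set ℝ) ≤ Metric.infDist v (P : Set ℝ))
    (hopt : ∀ Q : Finset ℝ, Q.card = l → γ ≤ vwins V P Q) :
    ∀ Q : Finset ℝ, Q.card = l → γ ≤ vwins V P' Q :=
  fun Q hQ => le_trans (hopt Q hQ)
    (vwins_mono (fun v hv hyp => le_trans (hdom v hv) hyp))

/-- Moving the leftmost point of `P` to the nearest voter on its left, when all
voters to the right of `m` are "served" by points of `R`. -/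
lemma amove (V : Multiset ℝ) (γ l : ℕ) (m a : ℝ) (R : Finset ℝ)
    (hmV : m ∉ V) (ham : a < m)
    (hle_a : ∀ v ∈ V, v < m → v ≤ a)
    (hright : ∀ v ∈ V, m < v → ∃ p ∈ R, p ≤ v)
    (hRm : ∀ p ∈ R, m < p)
    (hopt : ∀ Q : Finset ℝ, Q.card = l → γ ≤ vwins V (insert m R) Q) :
    ∀ Q : Finset ℝ, Q.card = l → γ ≤ vwins V (insert a R) Q := by
  apply dom_transfer (fun v hv => ?_) hopt
  rcases lt_trichotomy v m with hvm | hvm | hvm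
  · have hva : v ≤ a := hle_a v hv hvm
    have h1 : Metric.infDist v ((insert a R : Finset ℝ) : Set ℝ) ≤ dist v a :=
      Metric.infDist_le_dist_of_mem (Finset.mem_coe.mpr (Finset.mem_insert_self a R))
    have h2 : dist v a = a - v := dub' hva
    have h3 := lb_insert hvm hRm
    linarith
  · exact absurd (hvm ▸ hv) hmV
  · obtain ⟨p₂, hp₂R, hp₂v⟩ := hright v hv hvm
    obtain ⟨p, hp, hpe⟩ := finset_exists_min v (Finset.insert_nonempty m R)
    rw [hpe]
    rcases Finset.mem_insert.mp hp with rfl | hpR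
    · calc Metric.infDist v ((insert a R : Finset ℝ) : Set ℝ) ≤ dist v p₂ :=
            Metric.infDist_le_dist_of_mem
              (Finset.mem_coe.mpr (Finset.mem_insert_of_mem hp₂R))
        _ = v - p₂ := dub hp₂v
        _ ≤ v - p := by have := hRm p₂ hp₂R; linarith
        _ ≤ dist v p := dlb' v p
    · exact Metric.infDist_le_dist_of_mem
        (Finset.mem_coe.mpr (Finset.mem_insert_of_mem hpR))

/-- the right-voter case of the b-move. -/
lemma right_case {m b v : ℝ} {R Q Qbig : Finset ℝ} (hQne : Q.Nonempty)
    (hmb : m < b) (hbv : b ≤ v)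
    (hsub : ∀ q ∈ Q, b < q → q ∈ Qbig)
    (hyp : Metric.infDist v ((insert m R : Finset ℝ) : Set ℝ) ≤
      Metric.infDist v (Qbig : Set ℝ)) :
    Metric.infDist v ((insert b R : Finset ℝ) : Set ℝ) ≤ Metric.infDist v (Q : Set ℝ) := by
  obtain ⟨q, hqQ, hqe⟩ := finset_exists_min v hQne
  have hbmem : (b : ℝ) ∈ ((insert b R : Finset ℝ) : Set ℝ) :=
    Finset.mem_coe.mpr (Finset.mem_insert_self b R)
  by_cases hqb : b < q
  · have h1 : Metric.infDist v ((insert b R : Finset ℝ) : Set ℝ) ≤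
        Metric.infDist v ((insert m R : Finset ℝ) : Set ℝ) := by
      obtain ⟨p, hp, hpe⟩ := finset_exists_min v (Finset.insert_nonempty m R)
      rw [hpe]
      rcases Finset.mem_insert.mp hp with rfl | hpR
      · calc Metric.infDist v ((insert b R : Finset ℝ) : Set ℝ) ≤ dist v b :=
              Metric.infDist_le_dist_of_mem hbmem
          _ = v - b := dub hbv
          _ ≤ v - p := by linarith
          _ ≤ dist v p := dlb' v p
      · exact Metric.infDist_le_dist_of_mem
          (Finset.mem_coe.mpr (Finset.mem_insert_of_mem hpR))
    have h2 : Metric.infDist v (Qbig : Set ℝ) ≤ dist v q :=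
      Metric.infDist_le_dist_of_mem (Finset.mem_coe.mpr (hsub q hqQ hqb))
    rw [hqe]; linarith
  · push_neg at hqb
    rw [hqe]
    calc Metric.infDist v ((insert b R : Finset ℝ) : Set ℝ) ≤ dist v b :=
          Metric.infDist_le_dist_of_mem hbmem
      _ = v - b := dub hbv
      _ ≤ v - q := by linarith
      _ ≤ dist v q := dlb' v q

/-- Moving the leftmost point of `P` to the nearest voter on its right preserves
the guarantee, provided that voter is still left of all the other points of `P`. -/
lemma bmove (V : Multiset ℝ) (γ l : ℕ) (hl : 1 ≤ l) (m b : ℝ) (R : Finset ℝ)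
    (hmV : m ∉ V) (hmb : m < b)
    (hgap : ∀ v ∈ V, m < v → b ≤ v)
    (hR : ∀ p ∈ R, b < p)
    (hopt : ∀ Q : Finset ℝ, Q.card = l → γ ≤ vwins V (insert m R) Q) :
    ∀ Q : Finset ℝ, Q.card = l → γ ≤ vwins V (insert b R) Q := by
  have hRm : ∀ p ∈ R, m < p := fun p hp => lt_trans hmb (hR p hp)
  intro Q hQ
  have hQne : Q.Nonempty := Finset.card_pos.mp (by omega)
  by_cases hcase : (∃ v ∈ V, v < m) ∧ (∃ q ∈ Q, q ≤ b)
  · obtain ⟨⟨v₀, hv₀V, hv₀⟩, q₀, hq₀Q, hq₀⟩ := hcase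
    set L := V.toFinset.filter (fun x => x < m) with hL
    have hLne : L.Nonempty :=
      ⟨v₀, Finset.mem_filter.mpr ⟨Multiset.mem_toFinset.mpr hv₀V, hv₀⟩⟩
    set a := L.max' hLne with ha
    have ham : a < m := (Finset.mem_filter.mp (L.max'_mem hLne)).2
    have hle_a : ∀ v ∈ V, v < m → v ≤ a := fun v hv hvm =>
      L.le_max' v (Finset.mem_filter.mpr ⟨Multiset.mem_toFinset.mpr hv, hvm⟩)
    set c := (m + a) / 2 with hc
    have hac : a < c := by rw [hc]; linarith
    have hcm : c < m := by rw [hc]; linarith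
    set Q₁ := insert c (Q.filter (fun q => b < q)) with hQ₁
    have hcard₁ : Q₁.card ≤ l := by
      rw [hQ₁]
      have hss : Q.filter (fun q => b < q) ⊂ Q :=
        Finset.filter_ssubset.mpr ⟨q₀, hq₀Q, not_lt.mpr hq₀⟩
      have h1 := Finset.card_lt_card hss
      have h2 := Finset.card_insert_le c (Q.filter (fun q => b < q))
      omega
    obtain ⟨Q', hsub, hQ'card⟩ := Infinite.exists_superset_card_eq Q₁ l hcard₁
    refine le_trans (hopt Q' hQ'card) (vwins_mono ?_)
    intro v hvV hyp
    rcases lt_trichotomy v m with hvm | hvm | hvm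
    · exfalso
      have h1 : Metric.infDist v (Q' : Set ℝ) ≤ dist v c :=
        Metric.infDist_le_dist_of_mem
          (Finset.mem_coe.mpr (hsub (Finset.mem_insert_self c _)))
      have h2 : dist v c = c - v := dub' (le_trans (hle_a v hvV hvm) hac.le)
      have h3 := lb_insert hvm hRm
      linarith
    · exact absurd (hvm ▸ hvV) hmV
    · exact right_case hQne hmb (hgap v hvV hvm)
        (fun q hq hbq => hsub (Finset.mem_insert_of_mem (Finset.mem_filter.mpr ⟨hq, hbq⟩)))
        hyp
  · refine le_trans (hopt Q hQ) (vwins_mono ?_)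
    intro v hvV hyp
    rcases lt_trichotomy v m with hvm | hvm | hvm
    · have hq : ∀ q ∈ Q, b < q := by
        by_contra hcon
        push_neg at hcon
        obtain ⟨q, hqQ, hqb⟩ := hcon
        exact hcase ⟨⟨v, hvV, hvm⟩, ⟨q, hqQ, hqb⟩⟩
      obtain ⟨q, hqQ, hqe⟩ := finset_exists_min v hQne
      rw [hqe]
      calc Metric.infDist v ((insert b R : Finset ℝ) : Set ℝ) ≤ dist v b :=
            Metric.infDist_le_dist_of_mem (Finset.mem_coe.mpr (Finset.mem_insert_self b R))
        _ = b - v := dub' (by linarith)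
        _ ≤ q - v := by have := hq q hqQ; linarith
        _ ≤ dist v q := dlb v q
    · exact absurd (hvm ▸ hvV) hmV
    · exact right_case hQne hmb (hgap v hvV hvm) (fun q hq _ => hq) hyp

lemma min'_insert_eq {x : ℝ} {R : Finset ℝ} (h : ∀ p ∈ R, x < p) :
    (insert x R).min' (Finset.insert_nonempty x R) = x := by
  refine le_antisymm (Finset.min'_le _ x (Finset.mem_insert_self x R))
    (Finset.le_min' _ _ _ (fun y hy => ?_))
  rcases Finset.mem_insert.mp hy with rfl | h'
  · exact le_rfl
  · exact (h y h').le

lemma vwins_le_card (V : Multiset ℝ) (P Q : Finset ℝ) : vwins V P Q ≤ Multiset.card V :=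
  Multiset.card_le_card (Multiset.filter_le _ _)

lemma gamma_attained (V : Multiset ℝ) (k l : ℕ) :
    ∃ P : Finset ℝ, P.card = k ∧ ∀ Q : Finset ℝ, Q.card = l → Gamma V k l ≤ vwins V P Q := by
  obtain ⟨P₀, hP₀⟩ := Infinite.exists_subset_card_eq ℝ k
  obtain ⟨Q₀, hQ₀⟩ := Infinite.exists_subset_card_eq ℝ l
  have hmem : Gamma V k l ∈ { g : ℕ | ∃ P : Finset ℝ, P.card = k ∧
      g = sInf { w : ℕ | ∃ Q : Finset ℝ, Q.card = l ∧ w = vwins V P Q } } := by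
    apply Nat.sSup_mem
    · exact ⟨_, P₀, hP₀, rfl⟩
    · refine ⟨Multiset.card V, ?_⟩
      rintro g ⟨P, hP, rfl⟩
      exact le_trans (Nat.sInf_le ⟨Q₀, hQ₀, rfl⟩) (vwins_le_card V P Q₀)
  obtain ⟨P, hP, hEq⟩ := hmem
  refine ⟨P, hP, fun Q hQ => ?_⟩
  rw [hEq]
  exact Nat.sInf_le ⟨Q, hQ, rfl⟩

lemma main_induction (V : Multiset ℝ) (hV : V ≠ 0) (k l : ℕ) (hk : 1 ≤ k) (hl : 1 ≤ l)
    (hkV : k < V.toFinset.card) (γ : ℕ) :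
    ∀ n : ℕ, ∀ P : Finset ℝ,
      (P.filter (fun p => p < V.toFinset.min' (by
        rw [Finset.nonempty_iff_ne_empty]
        simpa using hV))).card ≤ n →
      P.card = k → (∀ Q : Finset ℝ, Q.card = l → γ ≤ vwins V P Q) →
      ∃ (P' : Finset ℝ) (hP' : P'.Nonempty), P'.card = k ∧ P'.min' hP' ∈ V ∧
        ∀ Q : Finset ℝ, Q.card = l → γ ≤ vwins V P' Q := by
  have hVt : V.toFinset.Nonempty := by rw [Finset.nonempty_iff_ne_empty]; simpa using hV
  intro n
  induction n using Nat.strong_induction_on with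
  | _ n IH =>
  intro P hμ hcard hopt
  have hP : P.Nonempty := Finset.card_pos.mp (by omega)
  set m := P.min' hP with hm
  by_cases hmV : m ∈ V
  · exact ⟨P, hP, hcard, hmV, hopt⟩
  set R := P.erase m with hRdef
  have hmem : m ∈ P := P.min'_mem hP
  have hRcard : R.card = k - 1 := by rw [hRdef, Finset.card_erase_of_mem hmem, hcard]
  have hPeq : insert m R = P := Finset.insert_erase hmem
  have hmle : ∀ p ∈ P, m ≤ p := fun p hp => P.min'_le p hp
  have hRm : ∀ p ∈ R, m < p := fun p hp =>
    lt_of_le_of_ne (hmle p (Finset.erase_subset m P hp))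
      (Ne.symm (Finset.mem_erase.mp hp).1)
  have hopt' : ∀ Q : Finset ℝ, Q.card = l → γ ≤ vwins V (insert m R) Q := by
    intro Q hQ; rw [hPeq]; exact hopt Q hQ
  by_cases hb : ∃ v ∈ V, m < v
  · obtain ⟨w₀, hw₀V, hw₀⟩ := hb
    set G := V.toFinset.filter (fun x => m < x) with hG
    have hGne : G.Nonempty :=
      ⟨w₀, Finset.mem_filter.mpr ⟨Multiset.mem_toFinset.mpr hw₀V, hw₀⟩⟩
    set b := G.min' hGne with hbdef
    have hbV : b ∈ V := Multiset.mem_toFinset.mp (Finset.mem_filter.mp (G.min'_mem hGne)).1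
    have hmb : m < b := (Finset.mem_filter.mp (G.min'_mem hGne)).2
    have hgap : ∀ v ∈ V, m < v → b ≤ v := fun v hv hvm =>
      G.min'_le v (Finset.mem_filter.mpr ⟨Multiset.mem_toFinset.mpr hv, hvm⟩)
    by_cases hp : ∀ p ∈ R, b < p
    · -- b-move
      have hbR : b ∉ R := fun h => lt_irrefl b (hp b h)
      have hcard' : (insert b R).card = k := by
        rw [Finset.card_insert_of_notMem hbR, hRcard]; omega
      refine ⟨insert b R, Finset.insert_nonempty b R, hcard', ?_, ?_⟩
      · rw [min'_insert_eq hp]; exact hbV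
      · exact bmove V γ l hl m b R hmV hmb hgap hp hopt'
    · push_neg at hp
      obtain ⟨p₂, hp₂R, hp₂b⟩ := hp
      by_cases ha : ∃ v ∈ V, v < m
      · -- a-move
        obtain ⟨v₀, hv₀V, hv₀⟩ := ha
        set L := V.toFinset.filter (fun x => x < m) with hL
        have hLne : L.Nonempty :=
          ⟨v₀, Finset.mem_filter.mpr ⟨Multiset.mem_toFinset.mpr hv₀V, hv₀⟩⟩
        set a := L.max' hLne with hadef
        have haV : a ∈ V := Multiset.mem_toFinset.mp (Finset.mem_filter.mp (L.max'_mem hLne)).1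
        have ham : a < m := (Finset.mem_filter.mp (L.max'_mem hLne)).2
        have hle_a : ∀ v ∈ V, v < m → v ≤ a := fun v hv hvm =>
          L.le_max' v (Finset.mem_filter.mpr ⟨Multiset.mem_toFinset.mpr hv, hvm⟩)
        have haR : ∀ p ∈ R, a < p := fun p hpR => lt_trans ham (hRm p hpR)
        have haR' : a ∉ R := fun h => lt_irrefl a (haR a h)
        have hcard' : (insert a R).card = k := by
          rw [Finset.card_insert_of_notMem haR', hRcard]; omega
        refine ⟨insert a R, Finset.insert_nonempty a R, hcard', ?_, ?_⟩
        · rw [min'_insert_eq haR]; exact haV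
        · exact amove V γ l m a R hmV ham hle_a
            (fun v hv hvm => ⟨p₂, hp₂R, le_trans hp₂b (hgap v hv hvm)⟩) hRm hopt'
      · -- m is useless: swap it for a fresh voter and recurse
        have hnsub : ¬ V.toFinset ⊆ R := by
          intro hsub
          have := Finset.card_le_card hsub
          omega
        obtain ⟨w, hwVt, hwR⟩ := Finset.not_subset.mp hnsub
        have hwV : w ∈ V := Multiset.mem_toFinset.mp hwVt
        have hcard'' : (insert w R).card = k := by
          rw [Finset.card_insert_of_notMem hwR, hRcard]; omega
        have hdom : ∀ v ∈ V, Metric.infDist v ((insert w R : Finset ℝ) : Set ℝ) ≤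
            Metric.infDist v (P : Set ℝ) := by
          intro v hv
          have hvm : m < v := by
            rcases lt_trichotomy v m with h | h | h
            · exact absurd ⟨v, hv, h⟩ ha
            · exact absurd (h ▸ hv) hmV
            · exact h
          have hbv : b ≤ v := hgap v hv hvm
          obtain ⟨p, hpP, hpe⟩ := finset_exists_min v hP
          rw [hpe]
          by_cases hpm : p = m
          · calc Metric.infDist v ((insert w R : Finset ℝ) : Set ℝ) ≤ dist v p₂ :=
                  Metric.infDist_le_dist_of_mem
                    (Finset.mem_coe.mpr (Finset.mem_insert_of_mem hp₂R))
              _ = v - p₂ := dub (le_trans hp₂b hbv)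
              _ ≤ v - p := by have := hRm p₂ hp₂R; rw [hpm]; linarith
              _ ≤ dist v p := dlb' v p
          · exact Metric.infDist_le_dist_of_mem
              (Finset.mem_coe.mpr (Finset.mem_insert_of_mem
                (Finset.mem_erase.mpr ⟨hpm, hpP⟩)))
        have hopt'' := dom_transfer hdom hopt
        -- the measure strictly decreases
        set Vm := V.toFinset.min' hVt with hVm
        have hVmV : Vm ∈ V := Multiset.mem_toFinset.mp (V.toFinset.min'_mem hVt)
        have hmVm : m < Vm := by
          rcases lt_trichotomy Vm m with h | h | h
          · exact absurd ⟨Vm, hVmV, h⟩ ha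
          · exact absurd (h ▸ hVmV) hmV
          · exact h
        have hwVm : Vm ≤ w := V.toFinset.min'_le w hwVt
        have hss : (insert w R).filter (fun p => p < Vm) ⊂ P.filter (fun p => p < Vm) := by
          constructor
          · intro x hx
            obtain ⟨hx1, hx2⟩ := Finset.mem_filter.mp hx
            rcases Finset.mem_insert.mp hx1 with rfl | hxR
            · exact absurd hx2 (not_lt.mpr hwVm)
            · exact Finset.mem_filter.mpr ⟨Finset.erase_subset m P hxR, hx2⟩
          · intro hsub
            have hmf : m ∈ P.filter (fun p => p < Vm) :=
              Finset.mem_filter.mpr ⟨hmem, hmVm⟩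
            have := hsub hmf
            obtain ⟨h1, -⟩ := Finset.mem_filter.mp this
            rcases Finset.mem_insert.mp h1 with rfl | hmR
            · exact hmV hwV
            · exact (Finset.mem_erase.mp hmR).1 rfl
        have hlt := Finset.card_lt_card hss
        have hn1 : 1 ≤ n := by
          have hmf : m ∈ P.filter (fun p => p < Vm) :=
            Finset.mem_filter.mpr ⟨hmem, hmVm⟩
          have := Finset.card_pos.mpr ⟨m, hmf⟩
          omega
        exact IH (n - 1) (by omega) (insert w R) (by omega) hcard'' hopt''
  · -- no voters to the right of m
    push_neg at hb
    have ha : ∃ v ∈ V, v < m := by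
      obtain ⟨v₀, hv₀⟩ := Multiset.exists_mem_of_ne_zero hV
      refine ⟨v₀, hv₀, ?_⟩
      rcases lt_trichotomy v₀ m with h | h | h
      · exact h
      · exact absurd (h ▸ hv₀) hmV
      · exact absurd h (not_lt.mpr (hb v₀ hv₀))
    obtain ⟨v₀, hv₀V, hv₀⟩ := ha
    set L := V.toFinset.filter (fun x => x < m) with hL
    have hLne : L.Nonempty :=
      ⟨v₀, Finset.mem_filter.mpr ⟨Multiset.mem_toFinset.mpr hv₀V, hv₀⟩⟩
    set a := L.max' hLne with hadef
    have haV : a ∈ V := Multiset.mem_toFinset.mp (Finset.mem_filter.mp (L.max'_mem hLne)).1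
    have ham : a < m := (Finset.mem_filter.mp (L.max'_mem hLne)).2
    have hle_a : ∀ v ∈ V, v < m → v ≤ a := fun v hv hvm =>
      L.le_max' v (Finset.mem_filter.mpr ⟨Multiset.mem_toFinset.mpr hv, hvm⟩)
    have haR : ∀ p ∈ R, a < p := fun p hpR => lt_trans ham (hRm p hpR)
    have haR' : a ∉ R := fun h => lt_irrefl a (haR a h)
    have hcard' : (insert a R).card = k := by
      rw [Finset.card_insert_of_notMem haR', hRcard]; omega
    refine ⟨insert a R, Finset.insert_nonempty a R, hcard', ?_, ?_⟩
    · rw [min'_insert_eq haR]; exact haV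
    · exact amove V γ l m a R hmV ham hle_a
        (fun v hv hvm => absurd hvm (not_lt.mpr (hb v hv))) hRm hopt'

/-- If `k` is strictly smaller than the number of distinct voter positions, then
some optimal strategy for player P has its leftmost point at a voter. -/
theorem stmt4 (V : Multiset ℝ) (hV : V ≠ 0) (k l : ℕ) (hk : 1 ≤ k) (hl : 1 ≤ l)
    (hkV : k < V.toFinset.card) :
    ∃ (P : Finset ℝ) (hP : P.Nonempty), P.card = k ∧ P.min' hP ∈ V ∧
      ∀ Q : Finset ℝ, Q.card = l → Gamma V k l ≤ vwins V P Q := by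
  obtain ⟨P₀, hc, hopt⟩ := gamma_attained V k l
  exact main_induction V hV k l hk hl hkV (Gamma V k l)
    ((P₀.filter (fun p => p < V.toFinset.min' (by
      rw [Finset.nonempty_iff_ne_empty]; simpa using hV))).card) P₀ le_rfl hc hopt
end

section
/- Let V be a finite multiset of points in ℝ and let x < y be real numbers. Then the maximum, over q ∈ (x,y), of the number of voters v ∈ V with (x+q)/2 < v < (q+y)/2 equals the maximum, over t ∈ ℝ, of the number of voters v ∈ V with x < v < y and t < v < t + (y−x)/2. That is, the most voters player Q can win from V ∩ (x,y) by placing a single point in the open interval (x,y) bounded by two points of P equals the maximum number of voters of V ∩ (x,y) that can be covered by an open interval of length (y−x)/2. -/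
open scoped Classical

/-- The most voters player Q can win from `V ∩ (x,y)` by placing a single point
`q` in the open interval `(x,y)` (winning the voters in `((x+q)/2, (q+y)/2)`)
equals the maximum number of voters of `V ∩ (x,y)` that can be covered by an
open interval of length `(y−x)/2`. -/
theorem stmt7 (V : Multiset ℝ) (x y : ℝ) (hxy : x < y) :
    sSup { m : ℕ | ∃ q : ℝ, x < q ∧ q < y ∧
        m = Multiset.card (V.filter (fun v => (x + q) / 2 < v ∧ v < (q + y) / 2)) }
    = sSup { m : ℕ | ∃ t : ℝ,
        m = Multiset.card (V.filter
          (fun v => x < v ∧ v < y ∧ t < v ∧ v < t + (y - x) / 2)) } := by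
  set A := { m : ℕ | ∃ q : ℝ, x < q ∧ q < y ∧
        m = Multiset.card (V.filter (fun v => (x + q) / 2 < v ∧ v < (q + y) / 2)) } with hA
  set B := { m : ℕ | ∃ t : ℝ,
        m = Multiset.card (V.filter
          (fun v => x < v ∧ v < y ∧ t < v ∧ v < t + (y - x) / 2)) } with hB
  have bddA : BddAbove A := by
    refine ⟨Multiset.card V, ?_⟩
    rintro m ⟨q, _, _, rfl⟩
    exact Multiset.card_le_card (Multiset.filter_le _ _)
  have bddB : BddAbove B := by
    refine ⟨Multiset.card V, ?_⟩
    rintro m ⟨t, rfl⟩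
    exact Multiset.card_le_card (Multiset.filter_le _ _)
  have hAB : A ⊆ B := by
    rintro m ⟨q, hxq, hqy, rfl⟩
    refine ⟨(x + q) / 2, ?_⟩
    congr 1
    apply Multiset.filter_congr
    intro v _
    constructor
    · rintro ⟨h1, h2⟩
      refine ⟨by linarith, by linarith, h1, by linarith⟩
    · rintro ⟨_, _, h3, h4⟩
      exact ⟨h3, by linarith⟩
  have hAne : A.Nonempty := ⟨_, ⟨(x + y) / 2, by linarith, by linarith, rfl⟩⟩
  have hBne : B.Nonempty := ⟨_, ⟨0, rfl⟩⟩
  apply le_antisymm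
  · exact csSup_le_csSup bddB hAne hAB
  · apply csSup_le hBne
    rintro m ⟨t, rfl⟩
    set S := V.filter (fun v => x < v ∧ v < y ∧ t < v ∧ v < t + (y - x) / 2) with hS
    by_cases hSe : S = 0
    · rw [hSe]
      simp only [Multiset.card_zero]
      exact Nat.zero_le _
    · have hFne : S.toFinset.Nonempty := by
        simpa [Multiset.toFinset_nonempty] using hSe
      set a := S.toFinset.min' hFne with ha
      set b := S.toFinset.max' hFne with hb
      have haS : a ∈ S := Multiset.mem_toFinset.1 (S.toFinset.min'_mem hFne)
      have hbS : b ∈ S := Multiset.mem_toFinset.1 (S.toFinset.max'_mem hFne)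
      have hap := (Multiset.mem_filter.1 haS).2
      have hbp := (Multiset.mem_filter.1 hbS).2
      obtain ⟨hxa, hay, hta, haL⟩ := hap
      obtain ⟨hxb, hby, htb, hbL⟩ := hbp
      set q := (max x (2 * b - y) + min y (2 * a - x)) / 2 with hq
      have h1 : max x (2 * b - y) < min y (2 * a - x) := by
        apply max_lt <;> apply lt_min <;> linarith
      have hql : max x (2 * b - y) < q := by rw [hq]; linarith
      have hqr : q < min y (2 * a - x) := by rw [hq]; linarith
      have hxq : x < q := lt_of_le_of_lt (le_max_left _ _) hql
      have hqy : q < y := lt_of_lt_of_le hqr (min_le_left _ _)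
      have hqb : 2 * b - y < q := lt_of_le_of_lt (le_max_right _ _) hql
      have hqa : q < 2 * a - x := lt_of_lt_of_le hqr (min_le_right _ _)
      apply le_trans ?_ (le_csSup bddA ⟨q, hxq, hqy, rfl⟩)
      -- card S ≤ card (V.filter pred_q)
      have key : S = S.filter (fun v => (x + q) / 2 < v ∧ v < (q + y) / 2) := by
        symm
        rw [Multiset.filter_eq_self]
        intro v hv
        have hvS := hv
        have hvp := (Multiset.mem_filter.1 hvS).2
        have hva : a ≤ v := S.toFinset.min'_le v (Multiset.mem_toFinset.2 hvS)
        have hvb : v ≤ b := S.toFinset.le_max' v (Multiset.mem_toFinset.2 hvS)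
        constructor <;> linarith
      calc Multiset.card S
          = Multiset.card (S.filter (fun v => (x + q) / 2 < v ∧ v < (q + y) / 2)) := by
            rw [← key]
        _ ≤ Multiset.card (V.filter (fun v => (x + q) / 2 < v ∧ v < (q + y) / 2)) :=
            Multiset.card_le_card (Multiset.filter_le_filter _ (Multiset.filter_le _ _))
end

section
/- Let V be a finite multiset of points in ℝ and let x < y be real numbers. Then there exists q ∈ (x,y) such that 2 · |{v ∈ V : (x+q)/2 < v < (q+y)/2}| ≥ |{v ∈ V : x < v < y}| (counted with multiplicity). That is, the α-gain of the interval (x,y) — the maximum number of voters Q can win there with one point — is at least its β-gain, the number of voters in (x,y) not won by that single point. -/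
open scoped Classical

/-- The α-gain of the interval `(x,y)` — the maximum number of voters player Q can
win there with one point — is at least its β-gain, the number of voters in `(x,y)`
not won by that single point: some `q ∈ (x,y)` wins at least half of `V ∩ (x,y)`. -/
theorem stmt9 (V : Multiset ℝ) (x y : ℝ) (hxy : x < y) :
    ∃ q : ℝ, x < q ∧ q < y ∧
      Multiset.card (V.filter (fun v => x < v ∧ v < y)) ≤
        2 * Multiset.card (V.filter (fun v => (x + q) / 2 < v ∧ v < (q + y) / 2)) := by
  set A := V.filter (fun v => x < v ∧ v < y) with hA
  by_cases h0 : A = 0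
  · exact ⟨(x + y) / 2, by linarith, by linarith, by rw [h0]; simp⟩
  · set m := (x + y) / 2 with hm
    have hne : A.toFinset.Nonempty := by
      rwa [Multiset.toFinset_nonempty]
    have hcard : Multiset.card (A.filter (fun v => v ≤ m)) +
        Multiset.card (A.filter (fun v => ¬ v ≤ m)) = Multiset.card A := by
      rw [← Multiset.card_add, Multiset.filter_add_not]
    -- key monotonicity tool
    have key : ∀ (q : ℝ) (r : ℝ → Prop),
        (∀ v ∈ V, ((x < v ∧ v < y) ∧ r v) → ((x + q) / 2 < v ∧ v < (q + y) / 2)) →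
        Multiset.card (A.filter r) ≤
          Multiset.card (V.filter (fun v => (x + q) / 2 < v ∧ v < (q + y) / 2)) := by
      intro q r h
      rw [hA, Multiset.filter_filter]
      refine Multiset.card_le_card (Multiset.le_filter.mpr ⟨Multiset.filter_le _ _, ?_⟩)
      intro a ha
      obtain ⟨hr, hp⟩ := Multiset.of_mem_filter ha
      exact h a (Multiset.mem_of_mem_filter ha) ⟨hp, hr⟩
    rcases le_total (Multiset.card (A.filter (fun v => ¬ v ≤ m)))
        (Multiset.card (A.filter (fun v => v ≤ m))) with hc | hc
    · -- use q = min voter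
      set q := A.toFinset.min' hne with hq
      have hqmem : q ∈ A := Multiset.mem_toFinset.mp (A.toFinset.min'_mem hne)
      obtain ⟨hqx, hqy⟩ := Multiset.of_mem_filter hqmem
      refine ⟨q, hqx, hqy, ?_⟩
      have hle := key q (fun v => v ≤ m) (by
        intro v hv ⟨⟨h1, h2⟩, h3⟩
        have hvA : v ∈ A := Multiset.mem_filter.mpr ⟨hv, h1, h2⟩
        have hqv : q ≤ v := A.toFinset.min'_le v (Multiset.mem_toFinset.mpr hvA)
        constructor <;> [linarith; linarith [hm ▸ h3]])
      have hle' : Multiset.card (A.filter (fun v => v ≤ m)) ≤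
          Multiset.card (V.filter (fun v => (x + q) / 2 < v ∧ v < (q + y) / 2)) := by
        convert hle using 3
      omega
    · -- use q = max voter
      set q := A.toFinset.max' hne with hq
      have hqmem : q ∈ A := Multiset.mem_toFinset.mp (A.toFinset.max'_mem hne)
      obtain ⟨hqx, hqy⟩ := Multiset.of_mem_filter hqmem
      refine ⟨q, hqx, hqy, ?_⟩
      have hle := key q (fun v => ¬ v ≤ m) (by
        intro v hv ⟨⟨h1, h2⟩, h3⟩
        have hvA : v ∈ A := Multiset.mem_filter.mpr ⟨hv, h1, h2⟩
        have hqv : v ≤ q := A.toFinset.le_max' v (Multiset.mem_toFinset.mpr hvA)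
        have h3' : m < v := not_le.mp h3
        constructor <;> [linarith [hm ▸ h3']; linarith])
      have hle' : Multiset.card (A.filter (fun v => ¬ v ≤ m)) ≤
          Multiset.card (V.filter (fun v => (x + q) / 2 < v ∧ v < (q + y) / 2)) := by
        convert hle using 3
      omega
end

section
/- Let v₁ ≤ v₂ ≤ ⋯ ≤ v_n be the points of a finite multiset V of reals listed in nondecreasing order, let x < y be reals, and let t be an integer with 1 ≤ t ≤ n. Then there exists q ∈ (x,y) with |{j : (x+q)/2 < v_j < (q+y)/2}| ≥ t if and only if there exists an index i with 1 ≤ i ≤ n − t + 1 such that x < v_i, v_{i+t−1} < y, and y − x > 2 (v_{i+t−1} − v_i). (This is the characterization of the region A^{≥t} of the gain map: Q can win at least t voters in (x,y) with a single point iff some block of t consecutive voters lies strictly inside (x,y) and fits in an open interval of length (y−x)/2.) -/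
open scoped Classical

/-- Characterization of the region `A^{≥t}` of the gain map: player Q can win at
least `t` of the voters `v₁ ≤ ⋯ ≤ vₙ` lying in `(x,y)` with a single point
`q ∈ (x,y)` (winning the voters in `((x+q)/2, (q+y)/2)`) iff some block of `t`
consecutive voters lies strictly inside `(x,y)` and fits in an open interval of
length `(y−x)/2`, i.e. iff there is an index `i` with `x < vᵢ`, `v_{i+t−1} < y`
and `y − x > 2(v_{i+t−1} − vᵢ)`. -/
theorem stmt10 (n : ℕ) (v : ℕ → ℝ)
    (hmono : ∀ i j, 1 ≤ i → i ≤ j → j ≤ n → v i ≤ v j)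
    (x y : ℝ) (hxy : x < y) (t : ℕ) (ht1 : 1 ≤ t) (htn : t ≤ n) :
    (∃ q : ℝ, x < q ∧ q < y ∧
        t ≤ ((Finset.Icc 1 n).filter
          (fun j => (x + q) / 2 < v j ∧ v j < (q + y) / 2)).card)
    ↔ ∃ i : ℕ, 1 ≤ i ∧ i ≤ n - t + 1 ∧ x < v i ∧ v (i + t - 1) < y ∧
        2 * (v (i + t - 1) - v i) < y - x := by
  constructor
  · rintro ⟨q, hxq, hqy, hcard⟩
    set S := (Finset.Icc 1 n).filter
      (fun j => (x + q) / 2 < v j ∧ v j < (q + y) / 2) with hSdef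
    have hne : S.Nonempty := Finset.card_pos.mp (lt_of_lt_of_le ht1 hcard)
    set i := S.min' hne with hi
    set M := S.max' hne with hM
    have hiS : i ∈ S := S.min'_mem hne
    have hMS : M ∈ S := S.max'_mem hne
    rw [hSdef, Finset.mem_filter, Finset.mem_Icc] at hiS hMS
    have hsub : S ⊆ Finset.Icc i M := fun j hj =>
      Finset.mem_Icc.mpr ⟨S.min'_le j hj, S.le_max' j hj⟩
    have hcard2 : S.card ≤ M + 1 - i :=
      (Finset.card_le_card hsub).trans_eq (Nat.card_Icc i M)
    have hiM : i ≤ M := S.min'_le M (S.max'_mem hne)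
    have hMb : i + t - 1 ≤ M := by omega
    have h1i : 1 ≤ i := hiS.1.1
    have hMn : M ≤ n := hMS.1.2
    have hvle : v (i + t - 1) ≤ v M := hmono _ _ (by omega) hMb hMn
    refine ⟨i, h1i, by omega, ?_, ?_, ?_⟩
    · have := hiS.2.1; linarith
    · have := hMS.2.2; linarith
    · have h1 := hiS.2.1; have h2 := hMS.2.2; linarith
  · rintro ⟨i, h1i, hin, hxi, hiy, hgap⟩
    have hitn : i + t - 1 ≤ n := by omega
    have hvv : v i ≤ v (i + t - 1) := hmono _ _ h1i (by omega) hitn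
    have hlt : max x (2 * v (i + t - 1) - y) < min y (2 * v i - x) := by
      apply max_lt <;> apply lt_min <;> linarith
    obtain ⟨q, hq1, hq2⟩ := exists_between hlt
    have hxq : x < q := lt_of_le_of_lt (le_max_left _ _) hq1
    have hAq : 2 * v (i + t - 1) - y < q := lt_of_le_of_lt (le_max_right _ _) hq1
    have hqy : q < y := lt_of_lt_of_le hq2 (min_le_left _ _)
    have hqB : q < 2 * v i - x := lt_of_lt_of_le hq2 (min_le_right _ _)
    refine ⟨q, hxq, hqy, ?_⟩
    have hsub : Finset.Icc i (i + t - 1) ⊆ (Finset.Icc 1 n).filter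
        (fun j => (x + q) / 2 < v j ∧ v j < (q + y) / 2) := by
      intro j hj
      rw [Finset.mem_Icc] at hj
      have h1 : v i ≤ v j := hmono _ _ h1i hj.1 (by omega)
      have h2 : v j ≤ v (i + t - 1) := hmono _ _ (by omega) hj.2 hitn
      rw [Finset.mem_filter, Finset.mem_Icc]
      exact ⟨⟨by omega, by omega⟩, by linarith, by linarith⟩
    calc t = (Finset.Icc i (i + t - 1)).card := by rw [Nat.card_Icc]; omega
      _ ≤ _ := Finset.card_le_card hsub
end
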